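/- arXiv:2501.03888 — 5 statements merged into one kernel-verified Lean document; each statement's English description precedes it below -/
import Mathlib

section
/- For a conjunctive semi-symbolic node with I inputs, weights w ∈ {−6,0,6}^I with at least one nonzero weight, bias β = max_i |w_i| − Σ_i |w_i|, and input x ∈ {−1,1}^I, the raw output g(x) = Σ_i w_i x_i + β is either equal to 6 or at most −6; in particular it is never 0. -/
theorem conj_node_output_six_or_le_neg_six {I : ℕ} (w x : Fin I → ℝ)
    (hw : ∀ i, w i = -6 ∨ w i = 0 ∨ w i = 6)
    (i₀ : Fin I) (hi₀ : w i₀ ≠ 0)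
    (hx : ∀ i, x i = -1 ∨ x i = 1) :
    (∑ i, w i * x i) +
        (Finset.univ.sup' ⟨i₀, Finset.mem_univ i₀⟩ (fun i => |w i|) - ∑ i, |w i|) = 6 ∨
      (∑ i, w i * x i) +
        (Finset.univ.sup' ⟨i₀, Finset.mem_univ i₀⟩ (fun i => |w i|) - ∑ i, |w i|) ≤ -6 := by
  have hsup : Finset.univ.sup' ⟨i₀, Finset.mem_univ i₀⟩ (fun i => |w i|) = 6 := by
    apply le_antisymm
    · apply Finset.sup'_le
      intro i _
      rcases hw i with h | h | h <;> rw [h] <;> norm_num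
    · have h6 : |w i₀| = 6 := by
        rcases hw i₀ with h | h | h
        · rw [h]; norm_num
        · exact absurd h hi₀
        · rw [h]; norm_num
      calc (6:ℝ) = |w i₀| := h6.symm
        _ ≤ _ := Finset.le_sup' (fun i => |w i|) (Finset.mem_univ i₀)
  set f : Fin I → ℝ := fun i => |w i| - w i * x i with hf
  have hfcases : ∀ i, f i = 0 ∨ f i = 12 := by
    intro i
    rcases hw i with h | h | h <;> rcases hx i with h' | h' <;>
      simp [hf, h, h'] <;> norm_num
  have hfnn : ∀ i ∈ Finset.univ, (0:ℝ) ≤ f i := by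
    intro i _
    rcases hfcases i with h | h <;> rw [h] <;> norm_num
  have key : (∑ i, f i) = 0 ∨ (12:ℝ) ≤ ∑ i, f i := by
    by_cases hall : ∀ i, f i = 0
    · left; simp [hall]
    · right
      push_neg at hall
      obtain ⟨j, hj⟩ := hall
      have hj12 : f j = 12 := (hfcases j).resolve_left hj
      calc (12:ℝ) = f j := hj12.symm
        _ ≤ ∑ i, f i := Finset.single_le_sum hfnn (Finset.mem_univ j)
  have hsumeq : (∑ i, w i * x i) - ∑ i, |w i| = -(∑ i, f i) := by
    rw [← Finset.sum_sub_distrib]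
    simp [hf]
  rw [hsup]
  rcases key with h | h
  · left; linarith
  · right; linarith
end

section
/- For a disjunctive semi-symbolic node with I inputs, weights w ∈ {−6,0,6}^I with at least one nonzero weight, bias β = Σ_i |w_i| − max_i |w_i|, and input x ∈ {−1,1}^I, the raw output g(x) = Σ_i w_i x_i + β is either equal to −6 or at least 6; in particular it is never 0. -/
/-!
For x = ±1 each summand w x + |w| is 0 or 2|w|, i.e. 0 or 2c when w ∈ {-c, 0, c}, and the
maximum of the |wᵢ| is c once some weight is nonzero. Hence g(x) = ∑ (wᵢ xᵢ + |wᵢ|) - c is either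
-c (all summands vanish) or at least 2c - c = c.
-/

open Finset

lemma mul_add_abs_eq_zero_or_two_mul_abs {w x : ℝ} (hx : x = -1 ∨ x = 1) :
    w * x + |w| = 0 ∨ w * x + |w| = 2 * |w| := by
  rcases abs_choice w with h | h <;> rcases hx with rfl | rfl <;> rw [h] <;>
    first | (left; ring1) | (right; ring1)

lemma abs_eq_zero_or_eq_of_eq_neg_or_eq_zero_or_eq {w c : ℝ} (hc : 0 ≤ c)
    (hw : w = -c ∨ w = 0 ∨ w = c) : |w| = 0 ∨ |w| = c := by
  rcases hw with rfl | rfl | rfl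
  · exact .inr (by rw [abs_neg, abs_of_nonneg hc])
  · exact .inl abs_zero
  · exact .inr (abs_of_nonneg hc)

lemma Finset.sup'_eq_of_le_of_mem {ι α : Type*} [LinearOrder α] {s : Finset ι} (H : s.Nonempty)
    {f : ι → α} {a : α} (hle : ∀ i ∈ s, f i ≤ a) {i₀ : ι} (hi₀ : i₀ ∈ s) (hfi₀ : f i₀ = a) :
    s.sup' H f = a :=
  le_antisymm (sup'_le H f hle) (hfi₀ ▸ le_sup' f hi₀)

lemma Finset.sum_eq_zero_or_le_sum {ι : Type*} {s : Finset ι} {f : ι → ℝ} {a : ℝ} (ha : 0 ≤ a)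
    (hf : ∀ i ∈ s, f i = 0 ∨ a ≤ f i) : ∑ i ∈ s, f i = 0 ∨ a ≤ ∑ i ∈ s, f i := by
  by_cases hzero : ∀ i ∈ s, f i = 0
  · exact .inl (sum_eq_zero hzero)
  · push Not at hzero
    obtain ⟨j, hj, hfj⟩ := hzero
    have hnonneg : ∀ i ∈ s, 0 ≤ f i := fun i hi => (hf i hi).elim (·.ge) ha.trans
    exact .inr (((hf j hj).resolve_left hfj).trans (single_le_sum hnonneg hj))

theorem disj_node_output_eq_neg_or_ge {I : ℕ} {c : ℝ} (hc : 0 ≤ c) (w x : Fin I → ℝ)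
    (hw : ∀ i, w i = -c ∨ w i = 0 ∨ w i = c) (i₀ : Fin I) (hi₀ : w i₀ ≠ 0)
    (hx : ∀ i, x i = -1 ∨ x i = 1) :
    (∑ i, w i * x i) + ((∑ i, |w i|) - univ.sup' ⟨i₀, mem_univ i₀⟩ (fun i => |w i|)) = -c ∨
      c ≤ (∑ i, w i * x i) + ((∑ i, |w i|) - univ.sup' ⟨i₀, mem_univ i₀⟩ (fun i => |w i|)) := by
  have habs i : |w i| = 0 ∨ |w i| = c := abs_eq_zero_or_eq_of_eq_neg_or_eq_zero_or_eq hc (hw i)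
  have hsup : univ.sup' ⟨i₀, mem_univ i₀⟩ (fun i => |w i|) = c :=
    sup'_eq_of_le_of_mem _ (fun i _ => (habs i).elim (· ▸ hc) le_of_eq) (mem_univ i₀)
      ((habs i₀).resolve_left (abs_ne_zero.mpr hi₀))
  have hterm i : w i * x i + |w i| = 0 ∨ 2 * c ≤ w i * x i + |w i| := by
    rcases mul_add_abs_eq_zero_or_two_mul_abs (w := w i) (hx i) with h | h
    · exact .inl h
    · rcases habs i with h' | h' <;> rw [h, h'] <;> simp
  rw [hsup, ← add_sub_assoc, ← sum_add_distrib]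
  rcases sum_eq_zero_or_le_sum (by positivity) fun i _ => hterm i with h | h
  · exact .inl (by linarith)
  · exact .inr (by linarith)

theorem disj_node_output_neg_six_or_ge_six {I : ℕ} (w x : Fin I → ℝ)
    (hw : ∀ i, w i = -6 ∨ w i = 0 ∨ w i = 6)
    (i₀ : Fin I) (hi₀ : w i₀ ≠ 0)
    (hx : ∀ i, x i = -1 ∨ x i = 1) :
    (∑ i, w i * x i) +
        ((∑ i, |w i|) - Finset.univ.sup' ⟨i₀, Finset.mem_univ i₀⟩ (fun i => |w i|)) = -6 ∨
      6 ≤ (∑ i, w i * x i) +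
        ((∑ i, |w i|) - Finset.univ.sup' ⟨i₀, Finset.mem_univ i₀⟩ (fun i => |w i|)) :=
  disj_node_output_eq_neg_or_ge (by norm_num) w x hw i₀ hi₀ hx
end

section
/- Neural-to-bivalent-logic translation preserves truth values for conjunctions: given a conjunctive semi-symbolic node with weights w ∈ {−6,0,6}^I (at least one nonzero) and input x ∈ {−1,1}^I, the bivalent interpretation b (b = ⊤ iff g(x) > 0) equals the truth value of the propositional formula ⋀_{i: w_i=6} a_i ∧ ⋀_{i: w_i=−6} ¬a_i evaluated under the assignment a_i := (x_i = 1). -/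
theorem neural_to_bivalent_conjunction {I : ℕ} (w x : Fin I → ℝ)
    (hw : ∀ i, w i = -6 ∨ w i = 0 ∨ w i = 6)
    (i₀ : Fin I) (hi₀ : w i₀ ≠ 0)
    (hx : ∀ i, x i = -1 ∨ x i = 1) :
    (0 < (∑ i, w i * x i) +
        (Finset.univ.sup' ⟨i₀, Finset.mem_univ i₀⟩ (fun i => |w i|) - ∑ i, |w i|)) ↔
      ((∀ i, w i = 6 → x i = 1) ∧ (∀ i, w i = -6 → ¬ (x i = 1))) := by
  have hM : Finset.univ.sup' ⟨i₀, Finset.mem_univ i₀⟩ (fun i => |w i|) = 6 := by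
    apply le_antisymm
    · apply Finset.sup'_le
      intro i _
      rcases hw i with h | h | h <;> rw [h] <;> norm_num
    · have h := Finset.le_sup' (fun i => |w i|) (Finset.mem_univ i₀)
      have h6 : |w i₀| = 6 := by
        rcases hw i₀ with h0 | h0 | h0
        · rw [h0]; norm_num
        · exact absurd h0 hi₀
        · rw [h0]; norm_num
      rw [h6] at h; exact h
  rw [hM]
  set d : Fin I → ℝ := fun i => |w i| - w i * x i with hd
  have hdcase : ∀ i, d i = 0 ∨ d i = 12 := by
    intro i
    rcases hw i with h | h | h <;> rcases hx i with h' | h' <;>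
      simp [hd, h, h'] <;> norm_num
  have hiff : ∀ i, d i = 0 ↔ ((w i = 6 → x i = 1) ∧ (w i = -6 → ¬ x i = 1)) := by
    intro i
    rcases hw i with h | h | h <;> rcases hx i with h' | h' <;>
      simp [hd, h, h'] <;> norm_num
  have hsum : (∑ i, w i * x i) + (6 - ∑ i, |w i|) = 6 - ∑ i, d i := by
    simp [hd, Finset.sum_sub_distrib]
    ring
  rw [hsum]
  constructor
  · intro hpos
    have hall : ∀ i, d i = 0 := by
      intro i
      rcases hdcase i with h | h
      · exact h
      · exfalso
        have : d i ≤ ∑ j, d j := by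
          apply Finset.single_le_sum (f := d) _ (Finset.mem_univ i)
          intro j _
          rcases hdcase j with h' | h' <;> rw [h'] <;> norm_num
        rw [h] at this
        linarith
    constructor
    · intro i h6; exact ((hiff i).mp (hall i)).1 h6
    · intro i h6; exact ((hiff i).mp (hall i)).2 h6
  · intro ⟨h1, h2⟩
    have : ∑ i, d i = 0 := Finset.sum_eq_zero fun i _ => (hiff i).mpr ⟨h1 i, h2 i⟩
    rw [this]; norm_num
end

section
/- Bivalent-logic-to-neural translation preserves truth values: given disjoint finite sets X⁺, X⁻ ⊆ {1,...,I} with X⁺ ∪ X⁻ nonempty, define weights w_i = 6 if i ∈ X⁺, w_i = −6 if i ∈ X⁻, 0 otherwise, and bias β = 6 − 6(|X⁺|+|X⁻|). For any truth assignment P ⊆ {1,...,I} with translated input x_i = 1 if i ∈ P and −1 otherwise, the propositional formula ⋀_{i∈X⁺} a_i ∧ ⋀_{i∈X⁻} ¬a_i holds under P if and only if Σ_i w_i x_i + β > 0. -/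
theorem bivalent_to_neural_conjunction {I : ℕ}
    (Xp Xm : Finset (Fin I)) (hdisj : Disjoint Xp Xm)
    (hne : (Xp ∪ Xm).Nonempty)
    (w : Fin I → ℝ)
    (hw : ∀ i, w i = if i ∈ Xp then 6 else if i ∈ Xm then -6 else 0)
    (P : Finset (Fin I)) (x : Fin I → ℝ)
    (hx : ∀ i, x i = if i ∈ P then 1 else -1) :
    ((∀ i ∈ Xp, i ∈ P) ∧ (∀ i ∈ Xm, i ∉ P)) ↔
      0 < (∑ i, w i * x i) + (6 - 6 * ((Xp.card : ℝ) + (Xm.card : ℝ))) := by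
  have hsplit : (∑ i, w i * x i) = ∑ i ∈ Xp, w i * x i + ∑ i ∈ Xm, w i * x i := by
    rw [← Finset.sum_union hdisj]
    apply (Finset.sum_subset (Finset.subset_univ _) _).symm
    intro i _ hi
    simp only [Finset.mem_union, not_or] at hi
    rw [hw i, if_neg hi.1, if_neg hi.2, zero_mul]
  have hA : ∑ i ∈ Xp, w i * x i
      = 12 * ((Xp ∩ P).card : ℝ) - 6 * Xp.card := by
    have : ∀ i ∈ Xp, w i * x i = 12 * (if i ∈ P then (1:ℝ) else 0) - 6 := by
      intro i hi
      rw [hw i, hx i, if_pos hi]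
      by_cases h : i ∈ P <;> simp [h] <;> norm_num
    rw [Finset.sum_congr rfl this, Finset.sum_sub_distrib, ← Finset.mul_sum,
      Finset.sum_boole, Finset.sum_const]
    have : Xp.filter (· ∈ P) = Xp ∩ P := by
      ext i; simp [Finset.mem_filter, Finset.mem_inter]
    rw [this]; push_cast; ring
  have hB : ∑ i ∈ Xm, w i * x i
      = 6 * (Xm.card : ℝ) - 12 * ((Xm ∩ P).card : ℝ) := by
    have : ∀ i ∈ Xm, w i * x i = 6 - 12 * (if i ∈ P then (1:ℝ) else 0) := by
      intro i hi
      have hnp : i ∉ Xp := fun h => (Finset.disjoint_left.1 hdisj h) hi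
      rw [hw i, hx i, if_neg hnp, if_pos hi]
      by_cases h : i ∈ P <;> simp [h] <;> norm_num
    rw [Finset.sum_congr rfl this, Finset.sum_sub_distrib, ← Finset.mul_sum,
      Finset.sum_boole, Finset.sum_const]
    have : Xm.filter (· ∈ P) = Xm ∩ P := by
      ext i; simp [Finset.mem_filter, Finset.mem_inter]
    rw [this]; push_cast; ring
  rw [hsplit, hA, hB]
  have hAle : (Xp ∩ P).card ≤ Xp.card := Finset.card_le_card Finset.inter_subset_left
  constructor
  · rintro ⟨h1, h2⟩
    have e1 : Xp ∩ P = Xp := Finset.inter_eq_left.2 (fun i hi => h1 i hi)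
    have e2 : Xm ∩ P = ∅ := Finset.eq_empty_of_forall_notMem (by
      intro i hi
      exact h2 i (Finset.mem_inter.1 hi).1 (Finset.mem_inter.1 hi).2)
    rw [e1, e2]
    simp; ring_nf; norm_num
  · intro hpos
    have key : (Xp.card : ℝ) + (Xm ∩ P).card < (Xp ∩ P).card + 1 := by nlinarith
    have keyn : Xp.card + (Xm ∩ P).card < (Xp ∩ P).card + 1 := by exact_mod_cast key
    have hBz : (Xm ∩ P).card = 0 := by omega
    have hAeq : (Xp ∩ P).card = Xp.card := by omega
    have e1 : Xp ⊆ P := by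
      have := Finset.eq_of_subset_of_card_le Finset.inter_subset_left (le_of_eq hAeq.symm)
      intro i hi; rw [← this] at hi; exact (Finset.mem_inter.1 hi).2
    have e2 : ∀ i ∈ Xm, i ∉ P := by
      intro i hi hip
      have : i ∈ Xm ∩ P := Finset.mem_inter.2 ⟨hi, hip⟩
      rw [Finset.card_eq_zero.1 hBz] at this
      exact absurd this (Finset.notMem_empty i)
    exact ⟨fun i hi => e1 hi, e2⟩
end

section
/- Neural-to-bivalent-logic translation preserves truth values for disjunctions: given a disjunctive semi-symbolic node with weights w ∈ {−6,0,6}^I (at least one nonzero), bias β = Σ_i |w_i| − max_i |w_i|, and input x ∈ {−1,1}^I, the output g(x) = Σ_i w_i x_i + β is positive if and only if there exists an index i with w_i = 6 and x_i = 1, or w_i = −6 and x_i = −1. -/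
theorem neural_to_bivalent_disjunction {I : ℕ} (w x : Fin I → ℝ)
    (hw : ∀ i, w i = -6 ∨ w i = 0 ∨ w i = 6)
    (i₀ : Fin I) (hi₀ : w i₀ ≠ 0)
    (hx : ∀ i, x i = -1 ∨ x i = 1) :
    (0 < (∑ i, w i * x i) +
        ((∑ i, |w i|) - Finset.univ.sup' ⟨i₀, Finset.mem_univ i₀⟩ (fun i => |w i|))) ↔
      (∃ i, (w i = 6 ∧ x i = 1) ∨ (w i = -6 ∧ x i = -1)) := by
  have hsup : Finset.univ.sup' ⟨i₀, Finset.mem_univ i₀⟩ (fun i => |w i|) = 6 := by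
    apply le_antisymm
    · apply Finset.sup'_le
      intro i _
      rcases hw i with h | h | h <;> rw [h] <;> norm_num
    · have h0 : |w i₀| = 6 := by
        rcases hw i₀ with h | h | h
        · rw [h]; norm_num
        · exact absurd h hi₀
        · rw [h]; norm_num
      calc (6:ℝ) = |w i₀| := h0.symm
        _ ≤ _ := Finset.le_sup' (fun i => |w i|) (Finset.mem_univ i₀)
  rw [hsup]
  have key : ∀ i, w i * x i + |w i| = 0 ∨
      ((w i = 6 ∧ x i = 1) ∨ (w i = -6 ∧ x i = -1)) ∧ w i * x i + |w i| = 12 := by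
    intro i
    rcases hw i with h | h | h <;> rcases hx i with h' | h' <;>
      simp [h, h'] <;> norm_num
  have hnonneg : ∀ i ∈ Finset.univ, (0:ℝ) ≤ w i * x i + |w i| := by
    intro i _
    rcases key i with h | ⟨_, h⟩ <;> rw [h] <;> norm_num
  have hsum : (∑ i, w i * x i) + ((∑ i, |w i|) - 6)
      = (∑ i, (w i * x i + |w i|)) - 6 := by
    rw [Finset.sum_add_distrib]; ring
  rw [hsum]
  constructor
  · intro h
    by_contra hc
    push_neg at hc
    have hzero : ∀ i ∈ Finset.univ, w i * x i + |w i| = 0 := by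
      intro i _
      rcases key i with h' | ⟨hcond, _⟩
      · exact h'
      · rcases hcond with ⟨h1, h2⟩ | ⟨h1, h2⟩
        · exact absurd h2 ((hc i).1 h1)
        · exact absurd h2 ((hc i).2 h1)
    rw [Finset.sum_eq_zero hzero] at h
    norm_num at h
  · rintro ⟨i, hi⟩
    have h12 : w i * x i + |w i| = 12 := by
      rcases hi with ⟨h1, h2⟩ | ⟨h1, h2⟩ <;> rw [h1, h2] <;> norm_num
    have : (12:ℝ) ≤ ∑ i, (w i * x i + |w i|) := by
      rw [← h12]
      exact Finset.single_le_sum hnonneg (Finset.mem_univ i)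
    linarith
end
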